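/- For 0 ≤ i ≤ n, the dual Bernstein polynomial admits the power-basis representation D^n_i(x; α, β) = A^{(α,β)}_{ni} · ((α+1)_n / (n+1)!) · Σ_{j=0}^{n} B^{(α,β)}_{nj} F(i,j) (1-x)^j, where A^{(α,β)}_{ni} = (-1)^{n-i} (n+1)(σ+1)_n / (K (α+1)_{n-i} (β+1)_i), B^{(α,β)}_{nj} = (-n)_j (n+σ+1)_j / (j! (α+1)_j), and F(i,j) = ₃F₂(j-n, -i, 1; -n, -n-α; 1). -/

import Mathlib

open scoped BigOperators
open MeasureTheory Polynomial

/-- Pochhammer symbol `(c)_l = c (c+1) ⋯ (c+l-1)`. -/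
noncomputable def poch (c : ℝ) (l : ℕ) : ℝ := ∏ j ∈ Finset.range l, (c + j)

/-- Shifted Jacobi polynomial `R_k^{(α,β)}(x)`. -/
noncomputable def jacobiR (α β : ℝ) (k : ℕ) (x : ℝ) : ℝ :=
  poch (α + 1) k / (Nat.factorial k) *
    ∑ l ∈ Finset.range (k + 1),
      poch (-(k : ℝ)) l * poch ((k : ℝ) + α + β + 1) l /
        (poch (α + 1) l * (Nat.factorial l)) * (1 - x) ^ l

/-- Hahn polynomial `Q_k(x; α, β; N)`. -/
noncomputable def hahnQ (α β : ℝ) (N k : ℕ) (x : ℝ) : ℝ :=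
  ∑ l ∈ Finset.range (k + 1),
    poch (-(k : ℝ)) l * poch ((k : ℝ) + α + β + 1) l * poch (-x) l /
      (poch (α + 1) l * poch (-(N : ℝ)) l * (Nat.factorial l))

/-- Bernstein basis polynomial `B^n_i(x)` as a real function. -/
noncomputable def bern (n i : ℕ) (x : ℝ) : ℝ :=
  (n.choose i : ℝ) * x ^ i * (1 - x) ^ (n - i)

/-- `D 0, …, D n` are the dual Bernstein polynomials of degree `n` with
parameters `α, β`: they have degree at most `n` and are biorthogonal to the
Bernstein basis w.r.t. the weight `(1-x)^α x^β` on `[0,1]`. -/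
def IsDualBernstein (n : ℕ) (α β : ℝ) (D : ℕ → Polynomial ℝ) : Prop :=
  (∀ j, j ≤ n → (D j).natDegree ≤ n) ∧
  ∀ i, i ≤ n → ∀ j, j ≤ n →
    (∫ x in (0:ℝ)..1, (1 - x) ^ α * x ^ β * bern n i x * (D j).eval x)
      = if i = j then (1:ℝ) else 0

/-- The terminating hypergeometric sum `F(i,j) = ₃F₂(j-n, -i, 1; -n, -n-α; 1)`. -/
noncomputable def hyperF (α : ℝ) (n i j : ℕ) : ℝ :=
  ∑ l ∈ Finset.range (min (n - j) i + 1),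
    poch ((j:ℝ) - n) l * poch (-(i:ℝ)) l * (Nat.factorial l) /
      (poch (-(n:ℝ)) l * poch (-(n:ℝ) - α) l * (Nat.factorial l))

/-!
Let `E_i` be the polynomial on the right-hand side (`dualBernsteinPoly`); it has degree at most `n`.
A polynomial of degree at most `n` that is orthogonal to every `B^n_k` for the weight
`(1-x)^α x^β` is orthogonal to itself, because the Bernstein polynomials span, and so it
vanishes. It therefore suffices to show that the `E_i` are biorthogonal to the Bernstein basis.
By the Beta integral, `∫ (1-x)^α x^β B^n_i (1-x)^j` is a fixed multiple of
`(α+n-i+1)_j / (n+σ+1)_j`, so pairing `B^n_i` with `E_m` gives a double sum over `j` and over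
the summation index `l` of `F(m,j)`. The sum over `j` is a Chu–Vandermonde sum, and what is left
is an alternating binomial sum equal to `δ_{im}` times the reciprocal of the normalising constant.
-/

open scoped Nat

theorem poch_eq_eval_ascPochhammer (c : ℝ) (k : ℕ) : poch c k = (ascPochhammer ℝ k).eval c := by
  induction k with
  | zero => simp [poch]
  | succ k ih => rw [ascPochhammer_succ_eval, ← ih, poch, Finset.prod_range_succ, poch]

theorem poch_eq_neg_one_pow_mul_descPochhammer (c : ℝ) (k : ℕ) :
    poch c k = (-1) ^ k * (descPochhammer ℤ k).smeval (-c) := by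
  rw [← aeval_eq_smeval, ← eval_map_algebraMap, descPochhammer_map,
    ← ascPochhammer_eval_neg_eq_descPochhammer, neg_neg, poch_eq_eval_ascPochhammer]

theorem poch_succ (c : ℝ) (k : ℕ) : poch c (k + 1) = poch c k * (c + k) :=
  Finset.prod_range_succ _ _

theorem poch_add (c : ℝ) (a b : ℕ) : poch c (a + b) = poch c a * poch (c + a) b := by
  simp only [poch_eq_eval_ascPochhammer, ← ascPochhammer_mul, eval_mul, eval_comp, eval_add, eval_X,
    eval_natCast]

theorem poch_pos {c : ℝ} (hc : 0 < c) (k : ℕ) : 0 < poch c k := by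
  rw [poch_eq_eval_ascPochhammer]; exact ascPochhammer_pos k c hc

theorem poch_neg_natCast (N k : ℕ) : poch (-N) k = (-1) ^ k * N.descFactorial k := by
  rw [poch_eq_eval_ascPochhammer, ascPochhammer_eval_neg_eq_descPochhammer,
    descPochhammer_eval_eq_descFactorial]

theorem poch_neg_natCast_eq_zero {N k : ℕ} (h : N < k) : poch (-N) k = 0 := by
  simp [poch_neg_natCast, Nat.descFactorial_eq_zero_iff_lt.2 h]

theorem poch_neg_natCast_ne_zero {N k : ℕ} (h : k ≤ N) : poch (-N) k ≠ 0 := by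
  simp [poch_neg_natCast, Nat.descFactorial_eq_zero_iff_lt, h]

theorem neg_one_pow_mul_poch_neg_natCast (N k : ℕ) :
    (-1) ^ k * poch (-N) k = N.descFactorial k := by
  rw [poch_neg_natCast, ← mul_assoc, ← mul_pow]
  norm_num

theorem poch_reflect (c : ℝ) (k : ℕ) : poch c k = (-1) ^ k * poch (1 - c - k) k := by
  rw [poch_eq_neg_one_pow_mul_descPochhammer, descPochhammer_smeval_eq_ascPochhammer,
    ascPochhammer_smeval_eq_eval, poch_eq_eval_ascPochhammer]
  ring_nf

theorem poch_mul_poch_add_comm (c : ℝ) (j l : ℕ) :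
    poch c j * poch (c + j) l = poch c l * poch (c + l) j := by
  rw [← poch_add, ← poch_add, add_comm]

theorem poch_one_sub_sub_mul_poch {c : ℝ} {l n : ℕ} (hl : l ≤ n) :
    poch (1 - c - n) l * poch c (n - l) = (-1) ^ l * poch c n := by
  have hbase : 1 - (1 - c - n) - l = c + ((n - l : ℕ) : ℝ) := by push_cast [hl]; ring
  rw [poch_reflect (1 - c - n), hbase, mul_assoc, mul_comm (poch _ l), ← poch_add,
    Nat.sub_add_cancel hl]

theorem poch_add_eq_sum_choose (x y : ℝ) (N : ℕ) :
    poch (x + y) N = ∑ j ∈ Finset.range (N + 1), (N.choose j : ℝ) * poch x j * poch y (N - j) := by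
  rw [poch_eq_neg_one_pow_mul_descPochhammer, neg_add,
    Ring.descPochhammer_smeval_add _ (Commute.all _ _),
    Finset.Nat.sum_antidiagonal_eq_sum_range_succ_mk, Finset.mul_sum]
  refine Finset.sum_congr rfl fun j hj => ?_
  have hj : j + (N - j) = N := by simp at hj; omega
  rw [poch_eq_neg_one_pow_mul_descPochhammer x, poch_eq_neg_one_pow_mul_descPochhammer y]
  nth_rw 1 [← hj]
  ring

/-- The Chu–Vandermonde identity. -/
theorem sum_poch_neg_natCast_div {c : ℝ} {N : ℕ} (hc : poch c N ≠ 0) (b : ℝ) :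
    ∑ j ∈ Finset.range (N + 1), poch (-N) j * poch b j / (j ! * poch c j) =
      poch (c - b) N / poch c N := by
  rw [eq_div_iff hc, Finset.sum_mul]
  have hrefl : poch (c - b) N = (-1) ^ N * poch (b + (1 - c - N)) N := by
    rw [poch_reflect]; ring_nf
  rw [hrefl, poch_add_eq_sum_choose, Finset.mul_sum]
  refine Finset.sum_congr rfl fun j hj => ?_
  have hjN : j ≤ N := Nat.lt_succ_iff.1 (Finset.mem_range.1 hj)
  have hsplit : poch c N = poch c j * poch (c + j) (N - j) := by
    rw [← poch_add, Nat.add_sub_cancel' hjN]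
  have hcj : poch c j ≠ 0 := fun h => hc (by rw [hsplit, h, zero_mul])
  rw [hsplit, poch_reflect (c + j), poch_neg_natCast, Nat.descFactorial_eq_factorial_mul_choose,
    Nat.cast_sub hjN]
  field_simp
  rw [show (-1 : ℝ) ^ N = (-1) ^ j * (-1) ^ (N - j) by rw [← pow_add, Nat.add_sub_cancel' hjN]]
  push_cast
  ring_nf

theorem sum_range_poch_neg_natCast_div {c : ℝ} {N M : ℕ} (hc : poch c N ≠ 0) (hNM : N ≤ M) (b : ℝ) :
    ∑ j ∈ Finset.range (M + 1), poch (-N) j * poch b j / (j ! * poch c j) =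
      poch (c - b) N / poch c N := by
  rw [← sum_poch_neg_natCast_div hc]
  refine (Finset.sum_subset (Finset.range_subset_range.2 (by omega)) fun j hjM hjN => ?_).symm
  simp only [Finset.mem_range, not_lt] at hjM hjN
  rw [poch_neg_natCast_eq_zero (by omega), zero_mul, zero_div]

noncomputable def hyperFTerm (α : ℝ) (n m j l : ℕ) : ℝ :=
  poch ((j : ℝ) - n) l * poch (-m) l / (poch (-n) l * poch (-n - α) l)

theorem hyperF_eq_sum_hyperFTerm (α : ℝ) {n m j : ℕ} (hm : m ≤ n) (hj : j ≤ n) :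
    hyperF α n m j = ∑ l ∈ Finset.range (n + 1), hyperFTerm α n m j l := by
  rw [hyperF]
  refine Finset.sum_subset_zero_on_sdiff (Finset.range_subset_range.2 (by omega)) (fun l hl => ?_)
    (fun l _ => mul_div_mul_right _ _ (Nat.cast_ne_zero.2 l.factorial_ne_zero))
  simp only [Finset.mem_sdiff, Finset.mem_range] at hl
  rcases Nat.lt_or_ge (n - j) l with h | h
  · rw [hyperFTerm, show (j : ℝ) - n = -((n - j : ℕ) : ℝ) by push_cast [hj]; ring,
      poch_neg_natCast_eq_zero h]
    simp
  · rw [hyperFTerm, poch_neg_natCast_eq_zero (show m < l by omega)]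
    simp

theorem sum_range_neg_one_pow_mul_choose {M K : ℕ} (h : M ≤ K) :
    ∑ k ∈ Finset.range (K + 1), (-1 : ℝ) ^ k * M.choose k = if M = 0 then 1 else 0 := by
  rw [← Finset.sum_subset (Finset.range_subset_range.2 (by omega : M + 1 ≤ K + 1))]
  · exact_mod_cast Int.alternating_sum_range_choose
  · intro k _ hk
    rw [Finset.mem_range, not_lt] at hk
    simp [Nat.choose_eq_zero_of_lt (show M < k by omega)]

theorem sum_range_neg_one_pow_mul_poch_mul_poch {i m n : ℕ} (hi : i ≤ n) (hm : m ≤ n) :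
    ∑ l ∈ Finset.range (n + 1), (-1) ^ l * poch (-m) l * poch (-(n - i : ℕ)) (n - l) =
      if i = m then (-1 : ℝ) ^ (n - i) * i ! * (n - i)! else 0 := by
  have hlow : ∑ l ∈ Finset.range i, (-1) ^ l * poch (-m) l * poch (-(n - i : ℕ)) (n - l) = 0 :=
    Finset.sum_eq_zero fun l hl => by
      rw [poch_neg_natCast _ (n - l), Nat.descFactorial_eq_zero_iff_lt.2 (by simp at hl; omega)]
      simp
  rw [show n + 1 = i + (n - i + 1) by omega, Finset.sum_range_add, hlow, zero_add]
  have hterm : ∀ k ∈ Finset.range (n - i + 1),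
      (-1) ^ (i + k) * poch (-m) (i + k) * poch (-(n - i : ℕ)) (n - (i + k)) =
        (-1) ^ (n - i) * m.descFactorial i * (n - i)! * ((-1) ^ k * (m - i).choose k) := by
    intro k hk
    have hk : k ≤ n - i := by simp at hk; omega
    have hdesc : m.descFactorial (i + k) = m.descFactorial i * (k ! * (m - i).choose k) := by
      rw [← Nat.descFactorial_mul_descFactorial (show i ≤ i + k by omega), Nat.add_sub_cancel_left,
        Nat.descFactorial_eq_factorial_mul_choose, mul_comm]
    have hfact : ((n - i).descFactorial (n - (i + k)) : ℝ) * k ! = (n - i)! := by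
      have := Nat.factorial_mul_descFactorial (show n - i - k ≤ n - i by omega)
      rw [show n - i - (n - i - k) = k by omega, show n - i - k = n - (i + k) by omega] at this
      rw [mul_comm]; exact_mod_cast this
    have hsign : (-1 : ℝ) ^ (n - (i + k)) = (-1) ^ (n - i) * (-1) ^ k := by
      rw [← pow_add, show n - i + k = n - (i + k) + 2 * k by omega, pow_add, pow_mul]; simp
    rw [neg_one_pow_mul_poch_neg_natCast, poch_neg_natCast, hdesc, hsign, ← hfact]
    push_cast
    ring
  rw [Finset.sum_congr rfl hterm, ← Finset.mul_sum,
    sum_range_neg_one_pow_mul_choose (show m - i ≤ n - i by omega)]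
  rcases lt_trichotomy i m with h | rfl | h
  · simp [h.ne, show m - i ≠ 0 by omega]
  · simp [Nat.descFactorial_self]
  · simp [h.ne', Nat.descFactorial_eq_zero_iff_lt.2 h]

theorem sum_poch_mul_hyperFTerm {α : ℝ} (hα : -1 < α) (i m : ℕ) {n l : ℕ} (hl : l ≤ n) :
    ∑ j ∈ Finset.range (n + 1),
        poch (-n) j * poch (α + (n - i : ℕ) + 1) j / (j ! * poch (α + 1) j) * hyperFTerm α n m j l =
      (-1) ^ l * poch (-m) l * poch (-(n - i : ℕ)) (n - l) / poch (α + 1) n := by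
  have hnl : -(n : ℝ) + l = -((n - l : ℕ) : ℝ) := by push_cast [hl]; ring
  -- `(-n)_j (j - n)_l = (-n)_(j + l)` is symmetric in `j` and `l`, which turns the sum over `j`
  -- into a Chu–Vandermonde sum of length `n - l`.
  have hswap : ∀ j ∈ Finset.range (n + 1),
      poch (-n) j * poch (α + (n - i : ℕ) + 1) j / (j ! * poch (α + 1) j) * hyperFTerm α n m j l =
        poch (-m) l / poch (-n - α) l *
          (poch (-(n - l : ℕ)) j * poch (α + (n - i : ℕ) + 1) j / (j ! * poch (α + 1) j)) := by
    intro j _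
    have hsymm := poch_mul_poch_add_comm (-n) j l
    rw [neg_add_eq_sub] at hsymm
    rw [hyperFTerm, ← hnl]
    field_simp [poch_neg_natCast_ne_zero hl]
    rw [mul_right_comm (poch _ j), hsymm]
    ring
  have hα1 : poch (α + 1) (n - l) ≠ 0 := (poch_pos (by linarith) _).ne'
  rw [Finset.sum_congr rfl hswap, ← Finset.mul_sum,
    sum_range_poch_neg_natCast_div hα1 (Nat.sub_le n l),
    show α + 1 - (α + (n - i : ℕ) + 1) = -((n - i : ℕ) : ℝ) by ring, div_mul_div_comm,
    show -(n : ℝ) - α = 1 - (α + 1) - n by ring, poch_one_sub_sub_mul_poch hl]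
  field_simp
  rw [← pow_mul, mul_comm l 2, pow_mul, neg_one_sq, one_pow, mul_one]

theorem sum_poch_mul_hyperF {α : ℝ} (hα : -1 < α) {i m n : ℕ} (hi : i ≤ n) (hm : m ≤ n) :
    ∑ j ∈ Finset.range (n + 1),
        poch (-n) j * poch (α + (n - i : ℕ) + 1) j / (j ! * poch (α + 1) j) * hyperF α n m j =
      if i = m then (-1) ^ (n - i) * i ! * (n - i)! / poch (α + 1) n else 0 := by
  have hexpand : ∀ j ∈ Finset.range (n + 1),
      poch (-n) j * poch (α + (n - i : ℕ) + 1) j / (j ! * poch (α + 1) j) * hyperF α n m j =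
        ∑ l ∈ Finset.range (n + 1), poch (-n) j * poch (α + (n - i : ℕ) + 1) j /
          (j ! * poch (α + 1) j) * hyperFTerm α n m j l := fun j hj => by
    rw [hyperF_eq_sum_hyperFTerm α hm (Nat.lt_succ_iff.1 (Finset.mem_range.1 hj)), Finset.mul_sum]
  rw [Finset.sum_congr rfl hexpand, Finset.sum_comm,
    Finset.sum_congr rfl fun l hl =>
      sum_poch_mul_hyperFTerm hα i m (Nat.lt_succ_iff.1 (Finset.mem_range.1 hl)),
    ← Finset.sum_div, sum_range_neg_one_pow_mul_poch_mul_poch hi hm]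
  split_ifs <;> simp

theorem Gamma_add_natCast_eq_mul_poch {c : ℝ} (hc : 0 < c) (k : ℕ) :
    Real.Gamma (c + k) = Real.Gamma c * poch c k := by
  induction k with
  | zero => simp [poch]
  | succ k ih =>
    rw [Nat.cast_succ, ← add_assoc, Real.Gamma_add_one (by positivity), ih, poch_succ]
    ring

theorem Gamma_add_natCast_add_natCast {c : ℝ} (hc : 0 < c) (a b : ℕ) :
    Real.Gamma (c + a + b) = Real.Gamma c * poch c a * poch (c + a) b := by
  rw [add_assoc, ← Nat.cast_add, Gamma_add_natCast_eq_mul_poch hc, poch_add, mul_assoc]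

theorem ofReal_rpow_mul_one_sub_rpow {x : ℝ} (hx : x ∈ Set.Icc (0 : ℝ) 1) (p q : ℝ) :
    ((x ^ p * (1 - x) ^ q : ℝ) : ℂ) = (x : ℂ) ^ (p : ℂ) * (1 - (x : ℂ)) ^ (q : ℂ) := by
  rw [Complex.ofReal_mul, Complex.ofReal_cpow hx.1, Complex.ofReal_cpow (sub_nonneg.2 hx.2),
    Complex.ofReal_sub, Complex.ofReal_one]

theorem intervalIntegrable_rpow_sub_one_mul_one_sub_rpow_sub_one {p q : ℝ} (hp : 0 < p)
    (hq : 0 < q) :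
    IntervalIntegrable (fun x : ℝ => x ^ (p - 1) * (1 - x) ^ (q - 1)) volume 0 1 := by
  have h := Complex.betaIntegral_convergent (u := p) (v := q) (by simpa) (by simpa)
  rw [intervalIntegrable_iff] at h ⊢
  refine IntegrableOn.congr_fun h.re (fun x hx => ?_) measurableSet_uIoc
  rw [Set.uIoc_of_le zero_le_one] at hx
  have := ofReal_rpow_mul_one_sub_rpow (Set.Ioc_subset_Icc_self hx) (p - 1) (q - 1)
  push_cast at this
  simp [← this]

theorem integral_rpow_sub_one_mul_one_sub_rpow_sub_one {p q : ℝ} (hp : 0 < p) (hq : 0 < q) :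
    ∫ x in (0 : ℝ)..1, x ^ (p - 1) * (1 - x) ^ (q - 1) =
      Real.Gamma p * Real.Gamma q / Real.Gamma (p + q) := by
  have h := Complex.Gamma_mul_Gamma_eq_betaIntegral (s := p) (t := q) (by simpa) (by simpa)
  have hbeta : Complex.betaIntegral p q =
      ((∫ x in (0 : ℝ)..1, x ^ (p - 1) * (1 - x) ^ (q - 1) : ℝ) : ℂ) := by
    rw [Complex.betaIntegral, ← intervalIntegral.integral_ofReal]
    refine intervalIntegral.integral_congr fun x hx => ?_
    rw [Set.uIcc_of_le zero_le_one] at hx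
    rw [ofReal_rpow_mul_one_sub_rpow hx]
    push_cast; rfl
  rw [hbeta, ← Complex.ofReal_add, Complex.Gamma_ofReal, Complex.Gamma_ofReal,
    Complex.Gamma_ofReal, ← Complex.ofReal_mul, ← Complex.ofReal_mul] at h
  rw [eq_div_iff (Real.Gamma_pos_of_pos (by linarith)).ne', mul_comm]
  exact (Complex.ofReal_injective h).symm

theorem intervalIntegrable_weight_mul {α β : ℝ} (hα : -1 < α) (hβ : -1 < β) {g : ℝ → ℝ}
    (hg : ContinuousOn g (Set.uIcc 0 1)) :
    IntervalIntegrable (fun x => (1 - x) ^ α * x ^ β * g x) volume 0 1 := by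
  refine IntervalIntegrable.mul_continuousOn ?_ hg
  have := intervalIntegrable_rpow_sub_one_mul_one_sub_rpow_sub_one (p := β + 1) (q := α + 1)
    (by linarith) (by linarith)
  simpa [mul_comm] using this

theorem continuous_bern (n k : ℕ) : Continuous (bern n k) := by
  unfold bern; fun_prop

theorem intervalIntegrable_weight_mul_bern_mul {α β : ℝ} (hα : -1 < α) (hβ : -1 < β) (n k : ℕ)
    {g : ℝ → ℝ} (hg : Continuous g) :
    IntervalIntegrable (fun x => (1 - x) ^ α * x ^ β * bern n k x * g x) volume 0 1 := by
  simpa only [mul_assoc] using intervalIntegrable_weight_mul hα hβ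
    (g := fun x => bern n k x * g x) ((continuous_bern n k).mul hg).continuousOn

noncomputable def weightedBernIntegral (n : ℕ) (α β : ℝ) (i : ℕ) : ℝ :=
  n.choose i * (Real.Gamma (α + 1) * Real.Gamma (β + 1) / Real.Gamma (α + β + 2)) *
    poch (β + 1) i * poch (α + 1) (n - i) / poch (α + β + 2) n

theorem integral_weight_mul_bern_mul_one_sub_pow {α β : ℝ} (hα : -1 < α) (hβ : -1 < β) {n i : ℕ}
    (hi : i ≤ n) (s : ℕ) :
    ∫ x in (0 : ℝ)..1, (1 - x) ^ α * x ^ β * bern n i x * (1 - x) ^ s =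
      weightedBernIntegral n α β i *
        (poch (α + (n - i : ℕ) + 1) s / poch ((n : ℝ) + α + β + 2) s) := by
  have hα1 : 0 < α + 1 := by linarith
  have hβ1 : 0 < β + 1 := by linarith
  have hp : 0 < β + 1 + i := add_pos_of_pos_of_nonneg hβ1 i.cast_nonneg
  have hq : 0 < α + 1 + (n - i : ℕ) + s := by positivity
  have hintegrand : ∀ᵐ x, x ∈ Set.uIoc (0 : ℝ) 1 →
      (1 - x) ^ α * x ^ β * bern n i x * (1 - x) ^ s =
        n.choose i * (x ^ (β + 1 + i - 1) * (1 - x) ^ (α + 1 + (n - i : ℕ) + s - 1)) := by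
    -- `x = 1` is discarded: `rpow_add_natCast` needs a nonzero base.
    filter_upwards [(Set.countable_singleton (1 : ℝ)).ae_notMem volume] with x hx1 hx
    rw [Set.uIoc_of_le zero_le_one] at hx
    have hx1 : 0 < 1 - x := sub_pos.2 (lt_of_le_of_ne hx.2 hx1)
    rw [show β + 1 + i - 1 = β + i by ring, Real.rpow_add_natCast hx.1.ne',
      show α + 1 + (n - i : ℕ) + s - 1 = α + (n - i : ℕ) + s by ring,
      Real.rpow_add_natCast hx1.ne', Real.rpow_add_natCast hx1.ne', bern]
    ring
  rw [intervalIntegral.integral_congr_ae hintegrand, intervalIntegral.integral_const_mul,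
    integral_rpow_sub_one_mul_one_sub_rpow_sub_one hp hq,
    show β + 1 + i + (α + 1 + (n - i : ℕ) + s) = α + β + 2 + n + s by push_cast [hi]; ring,
    Gamma_add_natCast_add_natCast hα1, Gamma_add_natCast_add_natCast (by linarith),
    Gamma_add_natCast_eq_mul_poch hβ1, show α + 1 + (n - i : ℕ) = α + (n - i : ℕ) + 1 by ring,
    show α + β + 2 + n = n + α + β + 2 by ring, weightedBernIntegral]
  field_simp

theorem pow_mem_span_bernsteinPolynomial {n m : ℕ} (hm : m ≤ n) :
    (X ^ m : ℝ[X]) ∈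
      Submodule.span ℝ (Set.range fun k : Fin (n + 1) => bernsteinPolynomial ℝ n k) := by
  have hexpand : (X ^ m : ℝ[X]) = ∑ k ∈ Finset.range (n - m + 1),
      ((n - m).choose k / n.choose (m + k) : ℝ) • bernsteinPolynomial ℝ n (m + k) := by
    calc (X ^ m : ℝ[X]) = X ^ m * (X + (1 - X)) ^ (n - m) := by
          rw [add_sub_cancel, one_pow, mul_one]
      _ = _ := by
        rw [add_pow, Finset.mul_sum]
        refine Finset.sum_congr rfl fun k hk => ?_
        have hk : m + k ≤ n := by simp at hk; omega
        have hchoose : (n.choose (m + k) : ℝ) ≠ 0 := Nat.cast_ne_zero.2 (Nat.choose_pos hk).ne'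
        have hC : (C ((n - m).choose k : ℝ) : ℝ[X]) =
            C ((n - m).choose k / n.choose (m + k) : ℝ) * C (n.choose (m + k) : ℝ) := by
          rw [← C_mul, div_mul_cancel₀ _ hchoose]
        rw [bernsteinPolynomial, ← C_eq_natCast, ← C_eq_natCast, smul_eq_C_mul, hC,
          show n - (m + k) = n - m - k by omega, pow_add]
        ring
  rw [hexpand]
  refine Submodule.sum_mem _ fun k hk => Submodule.smul_mem _ _ (Submodule.subset_span ?_)
  exact ⟨⟨m + k, by simp at hk; omega⟩, rfl⟩

theorem mem_span_bernsteinPolynomial {n : ℕ} {q : ℝ[X]} (hq : q.natDegree ≤ n) :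
    q ∈ Submodule.span ℝ (Set.range fun k : Fin (n + 1) => bernsteinPolynomial ℝ n k) := by
  rw [as_sum_range' q (n + 1) (Nat.lt_succ_of_le hq)]
  refine Submodule.sum_mem _ fun m hm => ?_
  rw [← smul_X_eq_monomial]
  exact Submodule.smul_mem _ _
    (pow_mem_span_bernsteinPolynomial (by simpa [Nat.lt_succ_iff] using hm))

theorem eval_bernsteinPolynomial (n k : ℕ) (x : ℝ) :
    (bernsteinPolynomial ℝ n k).eval x = bern n k x := by
  simp [bernsteinPolynomial, bern]

theorem exists_eval_eq_sum_bern {n : ℕ} {q : ℝ[X]} (hq : q.natDegree ≤ n) :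
    ∃ c : Fin (n + 1) → ℝ, ∀ x, q.eval x = ∑ k, c k * bern n k x := by
  obtain ⟨c, hc⟩ := (Submodule.mem_span_range_iff_exists_fun ℝ).1 (mem_span_bernsteinPolynomial hq)
  refine ⟨c, fun x => ?_⟩
  simp [← hc, eval_finsetSum, eval_bernsteinPolynomial]

theorem eq_zero_of_integral_weight_mul_self_eq_zero {α β : ℝ} (hα : -1 < α) (hβ : -1 < β) {q : ℝ[X]}
    (h : ∫ x in (0 : ℝ)..1, (1 - x) ^ α * x ^ β * (q.eval x * q.eval x) = 0) : q = 0 := by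
  set f := fun x : ℝ => (1 - x) ^ α * x ^ β * (q.eval x * q.eval x)
  have hnonneg : 0 ≤ᵐ[volume.restrict (Set.Ioc 0 1)] f := by
    filter_upwards [ae_restrict_mem measurableSet_Ioc] with x hx
    exact mul_nonneg
      (mul_nonneg (Real.rpow_nonneg (sub_nonneg.2 hx.2) α) (Real.rpow_nonneg hx.1.le β))
      (mul_self_nonneg _)
  have hzero : f =ᵐ[volume.restrict (Set.Ioc 0 1)] 0 :=
    (intervalIntegral.integral_eq_zero_iff_of_le_of_nonneg_ae zero_le_one hnonneg
      (intervalIntegrable_weight_mul hα hβ (q.continuous.mul q.continuous).continuousOn)).1 h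
  have hcont : ContinuousOn f (Set.Ioo 0 1) := by
    refine ContinuousOn.mul (ContinuousOn.mul ?_ ?_) (q.continuous.mul q.continuous).continuousOn
    · exact (continuousOn_const.sub continuousOn_id).rpow_const fun x hx =>
        Or.inl (sub_ne_zero.2 hx.2.ne')
    · exact continuousOn_id.rpow_const fun x hx => Or.inl hx.1.ne'
  have hvanish : Set.EqOn f 0 (Set.Ioo 0 1) :=
    Measure.eqOn_open_of_ae_eq (ae_restrict_of_ae_restrict_of_subset Set.Ioo_subset_Ioc_self hzero)
      isOpen_Ioo hcont continuousOn_const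
  refine eq_zero_of_infinite_isRoot q ((Set.Ioo_infinite zero_lt_one).mono fun x hx => ?_)
  have hw : 0 < (1 - x) ^ α * x ^ β :=
    mul_pos (Real.rpow_pos_of_pos (sub_pos.2 hx.2) α) (Real.rpow_pos_of_pos hx.1 β)
  have := hvanish hx
  simp only [f, Pi.zero_apply, mul_eq_zero, hw.ne', false_or, or_self] at this
  exact this

theorem eq_zero_of_forall_integral_weight_mul_bern_mul_eq_zero {α β : ℝ} (hα : -1 < α) (hβ : -1 < β)
    {n : ℕ} {q : ℝ[X]} (hq : q.natDegree ≤ n)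
    (horth : ∀ k ≤ n, ∫ x in (0 : ℝ)..1, (1 - x) ^ α * x ^ β * bern n k x * q.eval x = 0) :
    q = 0 := by
  obtain ⟨c, hc⟩ := exists_eval_eq_sum_bern hq
  refine eq_zero_of_integral_weight_mul_self_eq_zero hα hβ ?_
  calc ∫ x in (0 : ℝ)..1, (1 - x) ^ α * x ^ β * (q.eval x * q.eval x)
      = ∫ x in (0 : ℝ)..1, ∑ k, c k * ((1 - x) ^ α * x ^ β * bern n k x * q.eval x) := by
        refine intervalIntegral.integral_congr fun x _ => ?_
        nth_rw 1 [hc x]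
        rw [Finset.sum_mul, Finset.mul_sum]
        exact Finset.sum_congr rfl fun k _ => by ring
    _ = ∑ k, c k * ∫ x in (0 : ℝ)..1, (1 - x) ^ α * x ^ β * bern n k x * q.eval x := by
        rw [intervalIntegral.integral_finsetSum fun (k : Fin (n + 1)) _ =>
          (intervalIntegrable_weight_mul_bern_mul hα hβ n k q.continuous).const_mul (c k)]
        simp only [intervalIntegral.integral_const_mul]
    _ = 0 := Finset.sum_eq_zero fun k _ => by rw [horth k (Nat.lt_succ_iff.1 k.2), mul_zero]

noncomputable def dualBernsteinConst (n : ℕ) (α β : ℝ) (i : ℕ) : ℝ :=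
  (-1) ^ (n - i) * ((n : ℝ) + 1) * poch (α + β + 2) n /
      ((Real.Gamma (α + 1) * Real.Gamma (β + 1) / Real.Gamma (α + β + 2)) * poch (α + 1) (n - i) *
        poch (β + 1) i) *
    (poch (α + 1) n / (n + 1)!)

noncomputable def dualBernsteinCoeff (n : ℕ) (α β : ℝ) (j : ℕ) : ℝ :=
  poch (-n) j * poch ((n : ℝ) + α + β + 2) j / (j ! * poch (α + 1) j)

noncomputable def dualBernsteinPoly (n : ℕ) (α β : ℝ) (i : ℕ) : ℝ[X] :=
  C (dualBernsteinConst n α β i) *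
    ∑ j ∈ Finset.range (n + 1), C (dualBernsteinCoeff n α β j * hyperF α n i j) * (1 - X) ^ j

theorem eval_dualBernsteinPoly (n : ℕ) (α β : ℝ) (i : ℕ) (x : ℝ) :
    (dualBernsteinPoly n α β i).eval x = dualBernsteinConst n α β i *
      ∑ j ∈ Finset.range (n + 1), dualBernsteinCoeff n α β j * hyperF α n i j * (1 - x) ^ j := by
  simp [dualBernsteinPoly, eval_finsetSum]

theorem natDegree_dualBernsteinPoly_le (n : ℕ) (α β : ℝ) (i : ℕ) :
    (dualBernsteinPoly n α β i).natDegree ≤ n := by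
  refine (natDegree_C_mul_le _ _).trans (natDegree_sum_le_of_forall_le _ _ fun j hj => ?_)
  have hlin : (1 - X : ℝ[X]).natDegree ≤ 1 := (natDegree_sub_le _ _).trans (by simp)
  exact (natDegree_C_mul_le _ _).trans
    ((natDegree_pow_le_of_le j hlin).trans (by simp at hj; omega))

theorem dualBernsteinConst_mul_eq_one {α β : ℝ} (hα : -1 < α) (hβ : -1 < β) {n i : ℕ} (hi : i ≤ n) :
    dualBernsteinConst n α β i * weightedBernIntegral n α β i *
      ((-1) ^ (n - i) * i ! * (n - i)! / poch (α + 1) n) = 1 := by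
  have hα1 : 0 < α + 1 := by linarith
  have hβ1 : 0 < β + 1 := by linarith
  have hσ : 0 < α + β + 2 := by linarith
  have hchoose : (n.choose i : ℝ) * i ! * (n - i)! = n ! := by
    exact_mod_cast Nat.choose_mul_factorial_mul_factorial hi
  have hsign : (-1 : ℝ) ^ ((n - i) * 2) = 1 := by rw [mul_comm, pow_mul]; simp
  have := Real.Gamma_pos_of_pos hα1
  have := Real.Gamma_pos_of_pos hβ1
  have := Real.Gamma_pos_of_pos hσ
  have := poch_pos hα1 n
  have := poch_pos hα1 (n - i)
  have := poch_pos hβ1 i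
  have := poch_pos hσ n
  rw [dualBernsteinConst, weightedBernIntegral, Nat.factorial_succ]
  field_simp
  push_cast
  linear_combination
    ((n : ℝ) + 1) * (-1 : ℝ) ^ ((n - i) * 2) * hchoose + ((n : ℝ) + 1) * n ! * hsign

theorem integral_weight_mul_bern_mul_dualBernsteinPoly {α β : ℝ} (hα : -1 < α) (hβ : -1 < β)
    {n i m : ℕ} (hi : i ≤ n) (hm : m ≤ n) :
    ∫ x in (0 : ℝ)..1, (1 - x) ^ α * x ^ β * bern n i x * (dualBernsteinPoly n α β m).eval x =
      if i = m then 1 else 0 := by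
  have hexpand : ∀ x : ℝ,
      (1 - x) ^ α * x ^ β * bern n i x * (dualBernsteinPoly n α β m).eval x =
        ∑ j ∈ Finset.range (n + 1), dualBernsteinConst n α β m *
          (dualBernsteinCoeff n α β j * hyperF α n m j) *
            ((1 - x) ^ α * x ^ β * bern n i x * (1 - x) ^ j) := by
    intro x
    rw [eval_dualBernsteinPoly, Finset.mul_sum, Finset.mul_sum]
    exact Finset.sum_congr rfl fun j _ => by ring
  calc ∫ x in (0 : ℝ)..1, (1 - x) ^ α * x ^ β * bern n i x * (dualBernsteinPoly n α β m).eval x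
      = ∑ j ∈ Finset.range (n + 1), dualBernsteinConst n α β m *
          (dualBernsteinCoeff n α β j * hyperF α n m j) *
            ∫ x in (0 : ℝ)..1, (1 - x) ^ α * x ^ β * bern n i x * (1 - x) ^ j := by
        simp_rw [hexpand]
        rw [intervalIntegral.integral_finsetSum fun j _ =>
          (intervalIntegrable_weight_mul_bern_mul hα hβ n i
            (by fun_prop : Continuous fun x : ℝ => (1 - x) ^ j)).const_mul _]
        simp only [intervalIntegral.integral_const_mul]
    _ = dualBernsteinConst n α β m * weightedBernIntegral n α β i *
          ∑ j ∈ Finset.range (n + 1),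
            poch (-n) j * poch (α + (n - i : ℕ) + 1) j / (j ! * poch (α + 1) j) *
              hyperF α n m j := by
        simp_rw [integral_weight_mul_bern_mul_one_sub_pow hα hβ hi, Finset.mul_sum]
        refine Finset.sum_congr rfl fun j _ => ?_
        have : poch ((n : ℝ) + α + β + 2) j ≠ 0 :=
          (poch_pos (by linarith [(n.cast_nonneg : (0 : ℝ) ≤ n)]) j).ne'
        have hcancel : dualBernsteinCoeff n α β j *
            (poch (α + (n - i : ℕ) + 1) j / poch ((n : ℝ) + α + β + 2) j) =
            poch (-n) j * poch (α + (n - i : ℕ) + 1) j / (j ! * poch (α + 1) j) := by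
          rw [dualBernsteinCoeff]
          field_simp
        rw [← hcancel]
        ring
    _ = if i = m then 1 else 0 := by
        rw [sum_poch_mul_hyperF hα hi hm]
        split_ifs with him
        · subst him
          exact dualBernsteinConst_mul_eq_one hα hβ hi
        · rw [mul_zero]

theorem eq_dualBernsteinPoly_of_isDualBernstein {n : ℕ} {α β : ℝ} (hα : -1 < α) (hβ : -1 < β)
    {D : ℕ → ℝ[X]} (hD : IsDualBernstein n α β D) {i : ℕ} (hi : i ≤ n) :
    D i = dualBernsteinPoly n α β i := by
  have hdeg : (D i - dualBernsteinPoly n α β i).natDegree ≤ n :=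
    (natDegree_sub_le _ _).trans (max_le (hD.1 i hi) (natDegree_dualBernsteinPoly_le n α β i))
  refine sub_eq_zero.1
    (eq_zero_of_forall_integral_weight_mul_bern_mul_eq_zero hα hβ hdeg fun k hk => ?_)
  simp_rw [eval_sub, mul_sub]
  rw [intervalIntegral.integral_sub
      (intervalIntegrable_weight_mul_bern_mul hα hβ n k (D i).continuous)
      (intervalIntegrable_weight_mul_bern_mul hα hβ n k (dualBernsteinPoly n α β i).continuous),
    hD.2 k hk i hi, integral_weight_mul_bern_mul_dualBernsteinPoly hα hβ hk hi, sub_self]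

/-- Power-basis representation of dual Bernstein polynomials. -/
theorem dualBernstein_power_repr (n : ℕ) (α β : ℝ) (hα : α > -1) (hβ : β > -1)
    (D : ℕ → Polynomial ℝ) (hD : IsDualBernstein n α β D)
    (i : ℕ) (hi : i ≤ n) (x : ℝ) :
    (D i).eval x
      = ((-1)^(n-i) * ((n:ℝ)+1) * poch (α+β+2) n /
      ((Real.Gamma (α+1) * Real.Gamma (β+1) / Real.Gamma (α+β+2)) * poch (α+1) (n-i) * poch (β+1) i)) *
        (poch (α+1) n / (Nat.factorial (n+1) : ℝ)) *
        ∑ j ∈ Finset.range (n+1),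
          (poch (-(n:ℝ)) j * poch ((n:ℝ)+α+β+2) j /
            ((Nat.factorial j : ℝ) * poch (α+1) j)) *
          hyperF α n i j * (1-x)^j := by
  rw [eq_dualBernsteinPoly_of_isDualBernstein hα hβ hD hi, eval_dualBernsteinPoly]
  rfl
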